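/- arXiv:2409.18080 — 4 statements merged into one kernel-verified Lean document; each statement's English description precedes it below -/
import Mathlib

section
/- Let K = ℚ(√D) be a real quadratic field with D ≥ 2 squarefree, and let (β_j)_{j∈ℤ} be the ordered two-sided sequence of indecomposable totally positive elements of O_K (with β_0 = 1 and β_{-j} the conjugate of β_j), satisfying v_j β_j = β_{j-1} + β_{j+1} with v_j ≥ 2 for all j. Suppose α = β_{j_1} + β_{j_2} with j_1 ≤ j_2, and suppose there exists j_3 with j_3 > j_2 or j_3 < j_1 such that α - β_{j_3} is totally positive or zero. Then v_k = 2 for all k with j_1 ≤ k ≤ j_2. -/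
noncomputable section

/-- `ω_D`: the standard generator of the ring of integers of `ℚ(√D)`. -/
def omegaD (D : ℕ) : ℝ := if D % 4 = 1 then (1 + Real.sqrt D) / 2 else Real.sqrt D

/-- The Galois conjugate of `ω_D`. -/
def omegaD' (D : ℕ) : ℝ := if D % 4 = 1 then (1 - Real.sqrt D) / 2 else -Real.sqrt D

/-- Elements of `O_K` in coordinates: `(x, y)` represents `x + y·ω_D`. -/
abbrev OK : Type := ℤ × ℤ

/-- First real embedding. -/
def emb1 (D : ℕ) (a : OK) : ℝ := a.1 + a.2 * omegaD D

/-- Second real embedding (Galois conjugate). -/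
def emb2 (D : ℕ) (a : OK) : ℝ := a.1 + a.2 * omegaD' D

/-- Galois conjugation on `O_K`. -/
def conjOK (D : ℕ) (a : OK) : OK := (a.1 + (if D % 4 = 1 then (1 : ℤ) else 0) * a.2, -a.2)

/-- Total positivity. -/
def TotPos (D : ℕ) (a : OK) : Prop := 0 < emb1 D a ∧ 0 < emb2 D a

/-- The field norm. -/
def Nm (D : ℕ) (a : OK) : ℝ := emb1 D a * emb2 D a

/-- Indecomposability: totally positive and not a sum of two totally positive elements. -/
def Indec (D : ℕ) (a : OK) : Prop :=
  TotPos D a ∧ ¬ ∃ b c : OK, TotPos D b ∧ TotPos D c ∧ a = b + c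

/-- Number of partitions of `α` into indecomposable parts (`p_K(α|I)`). -/
def pKI (D : ℕ) (α : OK) : ℕ :=
  Set.ncard {s : Multiset OK | (∀ x ∈ s, Indec D x) ∧ s.sum = α}

/-- Number of partitions of `α` into totally positive parts (`p_K(α)`). -/
def pK (D : ℕ) (α : OK) : ℕ :=
  Set.ncard {s : Multiset OK | (∀ x ∈ s, TotPos D x) ∧ s.sum = α}

/-- Discriminant of `ℚ(√D)`. -/
def disc (D : ℕ) : ℕ := if D % 4 = 1 then D else 4 * D

/-- The ordered two-sided sequence of indecomposables together with
the coefficients `v j ≥ 2` from the Hejda–Kala relation `v_j β_j = β_{j-1} + β_{j+1}`. -/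
structure BetaSeq (D : ℕ) (β : ℤ → OK) (v : ℤ → ℤ) : Prop where
  indec : ∀ j, Indec D (β j)
  surj : ∀ a : OK, Indec D a → ∃ j, β j = a
  mono : StrictMono fun j => emb1 D (β j)
  zero : β 0 = (1, 0)
  conj_eq : ∀ j, β (-j) = conjOK D (β j)
  v_two_le : ∀ j, 2 ≤ v j
  v_symm : ∀ j, v (-j) = v j
  rel : ∀ j, v j • β j = β (j - 1) + β (j + 1)

/-- The continued fraction data of `ω_D = [⌈u₀/2⌉, \overline{u₁, …, u_s}]` (with `u_s = u_0`),
with tails `γ_0 = ω_D`, `γ_i = [u_i, u_{i+1}, …]` for `i ≥ 1`. -/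
structure CFData (D : ℕ) (u : ℕ → ℕ) (γ : ℕ → ℝ) : Prop where
  gamma_zero : γ 0 = omegaD D
  u_zero : (u 0 : ℤ) = 2 * ⌊omegaD D⌋ - (if D % 4 = 1 then 1 else 0)
  head : omegaD D = (⌊omegaD D⌋ : ℝ) + 1 / γ 1
  step : ∀ i, 1 ≤ i → γ i = u i + 1 / γ (i + 1)
  one_lt : ∀ i, 1 ≤ i → 1 < γ i
  floor_eq : ∀ i, 1 ≤ i → (u i : ℤ) = ⌊γ i⌋
  period : ∃ s, 1 ≤ s ∧ u s = u 0 ∧ ∀ i, 1 ≤ i → u (i + s) = u i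

/-- The convergents `α_i = p_i + q_i ξ_D`, indexed by `i ≥ -1`. -/
structure ConvData (D : ℕ) (u : ℕ → ℕ) (a : ℤ → OK) : Prop where
  neg_one : a (-1) = (1, 0)
  zero : a 0 = (⌊omegaD D⌋, 0) + (if D % 4 = 1 then ((-1 : ℤ), (1 : ℤ)) else (0, 1))
  recur : ∀ i : ℤ, -1 ≤ i → a (i + 2) = (u (i + 2).toNat : ℤ) • a (i + 1) + a i

/-- Semiconvergents `α_{i,r} = α_i + r·α_{i+1}`. -/
def semiconv (a : ℤ → OK) (i r : ℤ) : OK := a i + r • a (i + 1)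

private lemma emb1_add' (D : ℕ) (a b : OK) : emb1 D (a + b) = emb1 D a + emb1 D b := by
  simp only [emb1, Prod.fst_add, Prod.snd_add]
  push_cast; ring

private lemma emb1_sub' (D : ℕ) (a b : OK) : emb1 D (a - b) = emb1 D a - emb1 D b := by
  simp only [emb1, Prod.fst_sub, Prod.snd_sub]
  push_cast; ring

private lemma emb2_sub' (D : ℕ) (a b : OK) : emb2 D (a - b) = emb2 D a - emb2 D b := by
  simp only [emb2, Prod.fst_sub, Prod.snd_sub]
  push_cast; ring

private lemma emb1_smul' (D : ℕ) (n : ℤ) (a : OK) : emb1 D (n • a) = n * emb1 D a := by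
  simp only [emb1, Prod.smul_fst, Prod.smul_snd, smul_eq_mul]
  push_cast; ring

private lemma emb1_conj' (D : ℕ) (a : OK) : emb1 D (conjOK D a) = emb2 D a := by
  simp only [emb1, emb2, conjOK, omegaD, omegaD']
  split_ifs with h <;> push_cast <;> ring

/-- Key real-analytic lemma: if the relation `w j * F j = F (j-1) + F (j+1)` holds with
`w j ≥ 2`, `F` positive and strictly monotone, and `w k ≥ 3` for some `k ∈ [j1, j2]`,
then `F j1 + F j2 < F j3` for any `j3 > j2`. -/
private lemma key_lemma (F : ℤ → ℝ) (w : ℤ → ℤ)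
    (hpos : ∀ j, 0 < F j) (hmono : StrictMono F)
    (hrel : ∀ j, (w j : ℝ) * F j = F (j - 1) + F (j + 1))
    (hw : ∀ j, 2 ≤ w j)
    (j1 j2 j3 k : ℤ) (h1 : j1 ≤ k) (h2 : k ≤ j2) (h3 : j2 < j3)
    (hk : 3 ≤ w k) : F j1 + F j2 - F j3 < 0 := by
  set Dd : ℤ → ℝ := fun j => F (j + 1) - F j with hDd
  have hDmono : Monotone Dd := by
    apply monotone_int_of_le_succ
    intro n
    have h := hrel (n + 1)
    have hw' : (2 : ℝ) ≤ (w (n + 1) : ℝ) := by exact_mod_cast hw (n + 1)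
    have hF := hpos (n + 1)
    have e1 : n + 1 - 1 = n := by ring
    rw [e1] at h
    simp only [hDd]
    nlinarith [h]
  have hA : F (j2 + 1) ≤ F j3 := hmono.monotone (by linarith)
  have hB : Dd (j1 - 1) ≤ Dd (k - 1) := hDmono (by linarith)
  have hC : Dd (k - 1) + F k ≤ Dd k := by
    have h := hrel k
    have hw' : (3 : ℝ) ≤ (w k : ℝ) := by exact_mod_cast hk
    have hF := hpos k
    have ek : k - 1 + 1 = k := by ring
    simp only [hDd, ek]
    nlinarith [h]
  have hD' : Dd k ≤ Dd j2 := hDmono h2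
  have hE : F j1 ≤ F k := hmono.monotone h1
  have hG : F (j1 - 1) < F j1 := hmono (by linarith)
  have hDdj1 : Dd (j1 - 1) = F j1 - F (j1 - 1) := by
    have e : j1 - 1 + 1 = j1 := by ring
    simp only [hDd, e]
  have hDdj2 : F (j2 + 1) = F j2 + Dd j2 := by simp only [hDd]; ring
  linarith

/-- Lemma: `v_k = 2` on the whole range. -/
theorem stmt1 (D : ℕ) (hD : 2 ≤ D) (hsq : Squarefree D)
    (β : ℤ → OK) (v : ℤ → ℤ) (hβ : BetaSeq D β v)
    (j1 j2 j3 : ℤ) (hle : j1 ≤ j2) (hj3 : j2 < j3 ∨ j3 < j1)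
    (α : OK) (hα : α = β j1 + β j2)
    (hsub : α - β j3 = 0 ∨ TotPos D (α - β j3)) :
    ∀ k, j1 ≤ k → k ≤ j2 → v k = 2 := by
  intro k hk1 hk2
  by_contra hne
  have hk3 : 3 ≤ v k := by have := hβ.v_two_le k; omega
  set f : ℤ → ℝ := fun j => emb1 D (β j) with hf
  have hfpos : ∀ j, 0 < f j := fun j => (hβ.indec j).1.1
  have hfmono : StrictMono f := hβ.mono
  have hfrel : ∀ j, (v j : ℝ) * f j = f (j - 1) + f (j + 1) := by
    intro j
    have h := congrArg (emb1 D) (hβ.rel j)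
    rw [emb1_add', emb1_smul'] at h
    exact h
  have hg : ∀ j, emb2 D (β j) = f (-j) := by
    intro j
    simp only [hf]
    rw [hβ.conj_eq j, emb1_conj']
  rcases hj3 with h3 | h3
  · -- j2 < j3 : contradiction in the first embedding
    have hkey := key_lemma f v hfpos hfmono hfrel hβ.v_two_le j1 j2 j3 k hk1 hk2 h3 hk3
    have heq : emb1 D (α - β j3) = f j1 + f j2 - f j3 := by
      rw [emb1_sub', hα, emb1_add']
    rcases hsub with h0 | hpos
    · rw [h0] at heq
      simp only [emb1] at heq
      norm_num at heq
      linarith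
    · have := hpos.1
      linarith [heq ▸ this]
  · -- j3 < j1 : contradiction in the second embedding
    have hkey := key_lemma f v hfpos hfmono hfrel hβ.v_two_le (-j2) (-j1) (-j3) (-k)
      (by linarith) (by linarith) (by linarith) (by rw [hβ.v_symm]; exact hk3)
    have heq : emb2 D (α - β j3) = f (-j1) + f (-j2) - f (-j3) := by
      rw [emb2_sub', hα]
      have : emb2 D (β j1 + β j2) = emb2 D (β j1) + emb2 D (β j2) := by
        simp only [emb2, Prod.fst_add, Prod.snd_add]; push_cast; ring
      rw [this, hg, hg, hg]
    rcases hsub with h0 | hpos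
    · rw [h0] at heq
      simp only [emb2] at heq
      norm_num at heq
      linarith
    · have := hpos.2
      linarith [heq ▸ this]
end
end

section
/- Let K = ℚ(√D) with D ≥ 2 squarefree, let t ∈ {0,1}, and let α = β_j + β_{j+t} where (β_j) is the ordered two-sided sequence of indecomposables with relations v_k β_k = β_{k-1} + β_{k+1}. If there exists k_0 ≥ 0 such that v_k = 2 for all k ∈ {j-k_0, ..., j+k_0+t} but v_{j-k_0-1} > 2 or v_{j+k_0+1+t} > 2, then the number of ways to write α as an unordered sum of indecomposable totally positive elements equals k_0 + 2, and all such partitions are (β_{j-k}, β_{j+k+t}) for k ∈ {0, 1, ..., k_0+1}. -/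
noncomputable section

namespace Stmt2Aux

lemma emb1_add (D : ℕ) (a b : OK) : emb1 D (a + b) = emb1 D a + emb1 D b := by
  simp only [emb1, Prod.fst_add, Prod.snd_add]; push_cast; ring

lemma emb2_add (D : ℕ) (a b : OK) : emb2 D (a + b) = emb2 D a + emb2 D b := by
  simp only [emb2, Prod.fst_add, Prod.snd_add]; push_cast; ring

lemma emb1_smul (D : ℕ) (n : ℤ) (a : OK) : emb1 D (n • a) = n * emb1 D a := by
  simp only [emb1, Prod.smul_fst, Prod.smul_snd, smul_eq_mul]; push_cast; ring

lemma emb1_conj (D : ℕ) (a : OK) : emb1 D (conjOK D a) = emb2 D a := by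
  by_cases h : D % 4 = 1 <;>
    simp only [emb1, emb2, conjOK, omegaD, omegaD', h, if_true, if_false] <;> push_cast <;> ring

variable {D : ℕ} {β : ℤ → OK} {v : ℤ → ℤ}

lemma y_eq (hβ : BetaSeq D β v) (i : ℤ) : emb2 D (β i) = emb1 D (β (-i)) := by
  rw [hβ.conj_eq i]; exact (emb1_conj D (β i)).symm

def EE (D : ℕ) (β : ℤ → OK) (i : ℤ) : ℝ := emb1 D (β (i + 1)) - emb1 D (β i)

lemma v_real (hβ : BetaSeq D β v) (i : ℤ) : (2:ℝ) ≤ (v i : ℝ) := by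
  exact_mod_cast hβ.v_two_le i

lemma x_rel (hβ : BetaSeq D β v) (i : ℤ) :
    emb1 D (β (i - 1)) + emb1 D (β (i + 1)) = (v i : ℝ) * emb1 D (β i) := by
  have h := congrArg (emb1 D) (hβ.rel i)
  rw [emb1_add, emb1_smul] at h
  linarith [h]

lemma e_diff (hβ : BetaSeq D β v) (i : ℤ) :
    EE D β i - EE D β (i - 1) = ((v i : ℝ) - 2) * emb1 D (β i) := by
  have h := x_rel hβ i
  have i1 : i - 1 + 1 = i := by ring
  unfold EE
  rw [i1]
  linarith [h]

lemma e_mono (hβ : BetaSeq D β v) : Monotone (EE D β) := by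
  apply monotone_int_of_le_succ
  intro n
  have h := e_diff hβ (n + 1)
  have i1 : n + 1 - 1 = n := by ring
  rw [i1] at h
  have hv := v_real hβ (n + 1)
  have hx := (hβ.indec (n + 1)).1.1
  nlinarith

lemma e_pos (hβ : BetaSeq D β v) (i : ℤ) : 0 < EE D β i := by
  have := hβ.mono (show i < i + 1 by omega)
  exact sub_pos.mpr this

lemma e_strict (hβ : BetaSeq D β v) (i : ℤ) (h : 2 < v i) : EE D β (i - 1) < EE D β i := by
  have hd := e_diff hβ i
  have h3 : (3:ℝ) ≤ (v i : ℝ) := by exact_mod_cast h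
  have hx := (hβ.indec i).1.1
  nlinarith

lemma gap_lower (hβ : BetaSeq D β v) (i : ℤ) (n : ℕ) :
    (n:ℝ) * EE D β i ≤ emb1 D (β (i + n)) - emb1 D (β i) := by
  induction n with
  | zero => simp
  | succ n ih =>
    have h1 : EE D β i ≤ EE D β (i + n) := e_mono hβ (by omega)
    have h2 : emb1 D (β (i + n + 1)) = emb1 D (β (i + n)) + EE D β (i + n) := by
      unfold EE; ring
    have h3 : i + ((n:ℤ) + 1) = i + n + 1 := by ring
    push_cast
    rw [h3, h2]
    linarith

lemma gap_upper (hβ : BetaSeq D β v) (i : ℤ) (n : ℕ) :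
    emb1 D (β (i + n)) - emb1 D (β i) ≤ (n:ℝ) * EE D β (i + n - 1) := by
  induction n with
  | zero => simp
  | succ n ih =>
    have h1 : EE D β (i + n - 1) ≤ EE D β (i + n) := e_mono hβ (by omega)
    have h2 : emb1 D (β (i + n + 1)) = emb1 D (β (i + n)) + EE D β (i + n) := by
      unfold EE; ring
    have h3 : i + ((n:ℤ) + 1) = i + n + 1 := by ring
    have h4 : i + (n:ℤ) + 1 - 1 = i + n := by ring
    push_cast
    rw [h3, h4, h2]
    have hn : (0:ℝ) ≤ (n:ℝ) := Nat.cast_nonneg n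
    nlinarith

lemma gap_lower' (hβ : BetaSeq D β v) {i i' : ℤ} (h : i ≤ i') :
    ((i' - i : ℤ):ℝ) * EE D β i ≤ emb1 D (β i') - emb1 D (β i) := by
  have hh := gap_lower hβ i (i' - i).toNat
  have h2 : i + ((i' - i).toNat : ℤ) = i' := by omega
  rw [h2] at hh
  have h3 : (((i' - i).toNat : ℕ) : ℝ) = ((i' - i : ℤ) : ℝ) := by
    rw [← Int.cast_natCast]
    congr 1
    omega
  rw [h3] at hh
  exact hh

lemma gap_upper' (hβ : BetaSeq D β v) {i i' : ℤ} (h : i ≤ i') :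
    emb1 D (β i') - emb1 D (β i) ≤ ((i' - i : ℤ):ℝ) * EE D β (i' - 1) := by
  have hh := gap_upper hβ i (i' - i).toNat
  have h2 : i + ((i' - i).toNat : ℤ) = i' := by omega
  rw [h2] at hh
  have h3 : (((i' - i).toNat : ℕ) : ℝ) = ((i' - i : ℤ) : ℝ) := by
    rw [← Int.cast_natCast]
    congr 1
    omega
  rw [h3] at hh
  exact hh

lemma cross (hβ : BetaSeq D β v) {W Z a b : ℤ} (hWZ : W ≤ Z)
    (hv : 2 < v W ∨ 2 < v Z) (haW : a < W) (hbZ : Z < b)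
    (hx : emb1 D (β a) + emb1 D (β b) ≤ emb1 D (β W) + emb1 D (β Z))
    (hy : emb1 D (β (-a)) + emb1 D (β (-b)) ≤ emb1 D (β (-W)) + emb1 D (β (-Z))) :
    False := by
  have e1 := gap_lower' hβ (show Z ≤ b by omega)
  have e2 := gap_upper' hβ (show a ≤ W by omega)
  have e3 : EE D β (W - 1) ≤ EE D β Z := e_mono hβ (by omega)
  have e4 := gap_lower' hβ (show -W ≤ -a by omega)
  have e5 := gap_upper' hβ (show -b ≤ -Z by omega)
  have e6 : EE D β (-Z - 1) ≤ EE D β (-W) := e_mono hβ (by omega)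
  have pZ := e_pos hβ Z
  have pW := e_pos hβ (-W)
  have c1 : (1:ℝ) ≤ ((W - a : ℤ):ℝ) := by exact_mod_cast (by omega : (1:ℤ) ≤ W - a)
  have c2 : (1:ℝ) ≤ ((b - Z : ℤ):ℝ) := by exact_mod_cast (by omega : (1:ℤ) ≤ b - Z)
  have r1 : ((-a - -W : ℤ):ℝ) = ((W - a : ℤ):ℝ) := by push_cast; ring
  have r2 : ((-Z - -b : ℤ):ℝ) = ((b - Z : ℤ):ℝ) := by push_cast; ring
  rw [r1] at e4
  rw [r2] at e5
  have q1 : ((W - a : ℤ):ℝ) * EE D β (W - 1) ≤ ((W - a : ℤ):ℝ) * EE D β Z :=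
    mul_le_mul_of_nonneg_left e3 (by linarith)
  have q3 : ((b - Z : ℤ):ℝ) * EE D β (-Z - 1) ≤ ((b - Z : ℤ):ℝ) * EE D β (-W) :=
    mul_le_mul_of_nonneg_left e6 (by linarith)
  have hm1 : ((b - Z : ℤ):ℝ) ≤ ((W - a:ℤ):ℝ) := by
    by_contra hc
    push_neg at hc
    have q2 := mul_lt_mul_of_pos_right hc pZ
    linarith
  have hm2 : ((W - a : ℤ):ℝ) ≤ ((b - Z:ℤ):ℝ) := by
    by_contra hc
    push_neg at hc
    have q4 := mul_lt_mul_of_pos_right hc pW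
    linarith
  have hmm : ((W - a : ℤ):ℝ) = ((b - Z:ℤ):ℝ) := le_antisymm hm2 hm1
  rw [hmm] at e2
  have hEe : EE D β Z ≤ EE D β (W - 1) := by
    by_contra hc
    push_neg at hc
    have q5 : ((b - Z : ℤ):ℝ) * EE D β (W - 1) < ((b - Z : ℤ):ℝ) * EE D β Z :=
      mul_lt_mul_of_pos_left hc (by linarith)
    linarith
  rcases hv with hvW | hvZ
  · have s1 := e_strict hβ W hvW
    have s2 : EE D β W ≤ EE D β Z := e_mono hβ hWZ
    linarith
  · have s1 := e_strict hβ Z hvZ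
    have s2 : EE D β (W - 1) ≤ EE D β (Z - 1) := e_mono hβ (by omega)
    linarith



lemma Tlemma (hβ : BetaSeq D β v) (j t k0 : ℤ) (ht0 : 0 ≤ t) (ht1 : t ≤ 1) (hk0 : 0 ≤ k0)
    (h2 : ∀ k, j - k0 ≤ k → k ≤ j + k0 + t → v k = 2)
    (α : OK) (hα : α = β j + β (j + t)) :
    ∀ k : ℤ, 0 ≤ k → k ≤ k0 + 1 → β (j - k) + β (j + k + t) = α := by
  have base1 : β (j - 1) + β (j + 1 + t) = α := by
    rcases (by omega : t = 0 ∨ t = 1) with rfl | rfl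
    · have hv : v j = 2 := h2 j (by omega) (by omega)
      have hr := hβ.rel j
      rw [hv, two_zsmul] at hr
      have i1 : j + 1 + 0 = j + 1 := by ring
      have i2 : j + 0 = j := by ring
      rw [i1, hα, i2]
      linear_combination -hr
    · have hv1 : v j = 2 := h2 j (by omega) (by omega)
      have hv2 : v (j + 1) = 2 := h2 (j + 1) (by omega) (by omega)
      have hr1 := hβ.rel j
      have hr2 := hβ.rel (j + 1)
      rw [hv1, two_zsmul] at hr1
      rw [hv2, two_zsmul] at hr2
      have i1 : j + 1 - 1 = j := by ring
      have i2 : j + 1 + 1 = j + 2 := by ring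
      rw [i1, i2] at hr2
      rw [i2, hα]
      linear_combination -hr1 - hr2
  have main : ∀ n : ℕ, ((n:ℤ) ≤ k0 + 1 → β (j - n) + β (j + n + t) = α) ∧
      (((n:ℤ) + 1) ≤ k0 + 1 → β (j - ((n:ℤ) + 1)) + β (j + ((n:ℤ) + 1) + t) = α) := by
    intro n
    induction n with
    | zero =>
      constructor
      · intro _
        simpa using hα.symm
      · intro _
        simpa using base1
    | succ n ih =>
      constructor
      · intro hn
        have hres := ih.2 (by push_cast at hn; omega)
        push_cast
        exact hres
      · intro hn
        push_cast at hn
        have a1 := ih.2 (by omega)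
        have a0 := ih.1 (by omega)
        set N : ℤ := (n : ℤ) with hN
        push_cast
        have hv1 : v (j - (N + 1)) = 2 := h2 _ (by omega) (by omega)
        have hv2 : v (j + (N + 1) + t) = 2 := h2 _ (by omega) (by omega)
        have hr1 := hβ.rel (j - (N + 1))
        have hr2 := hβ.rel (j + (N + 1) + t)
        rw [hv1, two_zsmul] at hr1
        rw [hv2, two_zsmul] at hr2
        have i1 : j - (N + 1) - 1 = j - (N + 1 + 1) := by ring
        have i2 : j - (N + 1) + 1 = j - N := by ring
        have i3 : j + (N + 1) + t - 1 = j + N + t := by ring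
        have i4 : j + (N + 1) + t + 1 = j + (N + 1 + 1) + t := by ring
        rw [i1, i2] at hr1
        rw [i3, i4] at hr2
        linear_combination 2 * a1 - a0 - hr1 - hr2
  intro k hk1 hk2
  have hres := (main k.toNat).1 (by omega)
  rw [Int.toNat_of_nonneg hk1] at hres
  exact hres

lemma pair_classify (hβ : BetaSeq D β v) (j t k0 : ℤ) (ht0 : 0 ≤ t) (ht1 : t ≤ 1) (hk0 : 0 ≤ k0)
    (hbig : 2 < v (j - k0 - 1) ∨ 2 < v (j + k0 + 1 + t)) (α : OK)
    (Tz : ∀ k : ℤ, 0 ≤ k → k ≤ k0 + 1 → β (j - k) + β (j + k + t) = α) :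
    ∀ a b : ℤ, emb1 D (β a) + emb1 D (β b) ≤ emb1 D α →
      emb2 D (β a) + emb2 D (β b) ≤ emb2 D α →
      ∃ k, 0 ≤ k ∧ k ≤ k0 + 1 ∧ ((a = j - k ∧ b = j + k + t) ∨ (a = j + k + t ∧ b = j - k)) := by
  have hT := Tz (k0 + 1) (by omega) le_rfl
  have iW : j - (k0 + 1) = j - k0 - 1 := by ring
  have iZ : j + (k0 + 1) + t = j + k0 + 1 + t := by ring
  rw [iW, iZ] at hT
  have hα1 : emb1 D α = emb1 D (β (j - k0 - 1)) + emb1 D (β (j + k0 + 1 + t)) := by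
    rw [← hT, emb1_add]
  have hα2 : emb2 D α = emb1 D (β (-(j - k0 - 1))) + emb1 D (β (-(j + k0 + 1 + t))) := by
    rw [← hT, emb2_add, y_eq hβ, y_eq hβ]
  have key : ∀ a b : ℤ, j - k0 - 1 ≤ a → a ≤ j + k0 + 1 + t →
      emb1 D (β a) + emb1 D (β b) ≤ emb1 D α →
      emb1 D (β (-a)) + emb1 D (β (-b)) ≤ emb2 D α →
      ∃ k, 0 ≤ k ∧ k ≤ k0 + 1 ∧ ((a = j - k ∧ b = j + k + t) ∨ (a = j + k + t ∧ b = j - k)) := by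
    intro a b h1 h2' hx hy
    rcases le_or_gt a j with haj | haj
    · have hp := Tz (j - a) (by omega) (by omega)
      have i1 : j - (j - a) = a := by ring
      rw [i1] at hp
      have hx' : emb1 D (β b) ≤ emb1 D (β (j + (j - a) + t)) := by
        have hc := congrArg (emb1 D) hp
        rw [emb1_add] at hc
        linarith
      have hy' : emb1 D (β (-b)) ≤ emb1 D (β (-(j + (j - a) + t))) := by
        have hc := congrArg (emb2 D) hp
        rw [emb2_add, y_eq hβ a, y_eq hβ (j + (j - a) + t)] at hc
        linarith
      have hb1 : b ≤ j + (j - a) + t := hβ.mono.le_iff_le.mp hx'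
      have hb2 : -b ≤ -(j + (j - a) + t) := hβ.mono.le_iff_le.mp hy'
      exact ⟨j - a, by omega, by omega, Or.inl ⟨by omega, by omega⟩⟩
    · have hp := Tz (a - j - t) (by omega) (by omega)
      have i1 : j + (a - j - t) + t = a := by ring
      rw [i1] at hp
      have hx' : emb1 D (β b) ≤ emb1 D (β (j - (a - j - t))) := by
        have hc := congrArg (emb1 D) hp
        rw [emb1_add] at hc
        linarith
      have hy' : emb1 D (β (-b)) ≤ emb1 D (β (-(j - (a - j - t)))) := by
        have hc := congrArg (emb2 D) hp
        rw [emb2_add, y_eq hβ (j - (a - j - t)), y_eq hβ a] at hc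
        linarith
      have hb1 : b ≤ j - (a - j - t) := hβ.mono.le_iff_le.mp hx'
      have hb2 : -b ≤ -(j - (a - j - t)) := hβ.mono.le_iff_le.mp hy'
      exact ⟨a - j - t, by omega, by omega, Or.inr ⟨by omega, by omega⟩⟩
  intro a b hx hy
  rw [y_eq hβ a, y_eq hβ b] at hy
  by_cases hA : j - k0 - 1 ≤ a ∧ a ≤ j + k0 + 1 + t
  · exact key a b hA.1 hA.2 hx hy
  · by_cases hB : j - k0 - 1 ≤ b ∧ b ≤ j + k0 + 1 + t
    · obtain ⟨k, hk1, hk2, hor⟩ := key b a hB.1 hB.2 (by linarith) (by linarith)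
      exact ⟨k, hk1, hk2, by tauto⟩
    · have hA' : a < j - k0 - 1 ∨ j + k0 + 1 + t < a := by omega
      have hB' : b < j - k0 - 1 ∨ j + k0 + 1 + t < b := by omega
      exfalso
      rcases hA' with hA' | hA' <;> rcases hB' with hB' | hB'
      · have y1 : emb1 D (β (-(j - k0 - 1))) < emb1 D (β (-a)) := hβ.mono (by omega)
        have y2 : emb1 D (β (-(j + k0 + 1 + t))) < emb1 D (β (-b)) := hβ.mono (by omega)
        linarith [hα2]
      · exact cross (W := j - k0 - 1) (Z := j + k0 + 1 + t) hβ (by omega) hbig hA' hB'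
          (by linarith [hα1]) (by linarith [hα2])
      · exact cross (W := j - k0 - 1) (Z := j + k0 + 1 + t) hβ (by omega) hbig hB' hA'
          (by linarith [hα1]) (by linarith [hα2])
      · have x1 : emb1 D (β (j - k0 - 1)) < emb1 D (β a) := hβ.mono (by omega)
        have x2 : emb1 D (β (j + k0 + 1 + t)) < emb1 D (β b) := hβ.mono (by omega)
        linarith [hα1]

lemma sum_emb1_nonneg (D : ℕ) (s : Multiset OK) (h : ∀ z ∈ s, 0 < emb1 D z) :
    0 ≤ emb1 D s.sum := by
  induction s using Multiset.induction with
  | empty => simp [emb1]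
  | cons a s ih =>
    rw [Multiset.sum_cons, emb1_add]
    have h1 := h a (by simp)
    have h2 := ih (fun z hz => h z (by simp [hz]))
    linarith

lemma sum_emb2_nonneg (D : ℕ) (s : Multiset OK) (h : ∀ z ∈ s, 0 < emb2 D z) :
    0 ≤ emb2 D s.sum := by
  induction s using Multiset.induction with
  | empty => simp [emb2]
  | cons a s ih =>
    rw [Multiset.sum_cons, emb2_add]
    have h1 := h a (by simp)
    have h2 := ih (fun z hz => h z (by simp [hz]))
    linarith

end Stmt2Aux

open Stmt2Aux in
/-- `p_K(β_j + β_{j+t} | I) = k0 + 2` and the explicit list of partitions. -/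
theorem stmt2 (D : ℕ) (hD : 2 ≤ D) (hsq : Squarefree D)
    (β : ℤ → OK) (v : ℤ → ℤ) (hβ : BetaSeq D β v)
    (j t k0 : ℤ) (ht : t = 0 ∨ t = 1) (hk0 : 0 ≤ k0)
    (h2 : ∀ k, j - k0 ≤ k → k ≤ j + k0 + t → v k = 2)
    (hbig : 2 < v (j - k0 - 1) ∨ 2 < v (j + k0 + 1 + t))
    (α : OK) (hα : α = β j + β (j + t)) :
    pKI D α = (k0 + 2).toNat ∧
      {s : Multiset OK | (∀ x ∈ s, Indec D x) ∧ s.sum = α} =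
        (fun k : ℤ => ({β (j - k), β (j + k + t)} : Multiset OK)) ''
          {k : ℤ | 0 ≤ k ∧ k ≤ k0 + 1} := by
  have ht0 : 0 ≤ t := by rcases ht with rfl | rfl <;> omega
  have ht1 : t ≤ 1 := by rcases ht with rfl | rfl <;> omega
  have Tz := Tlemma hβ j t k0 ht0 ht1 hk0 h2 α hα
  have hset : {s : Multiset OK | (∀ x ∈ s, Indec D x) ∧ s.sum = α} =
      (fun k : ℤ => ({β (j - k), β (j + k + t)} : Multiset OK)) ''
        {k : ℤ | 0 ≤ k ∧ k ≤ k0 + 1} := by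
    ext s
    simp only [Set.mem_setOf_eq, Set.mem_image]
    constructor
    · rintro ⟨hind, hsum⟩
      by_cases hs0 : s = 0
      · exfalso
        subst hs0
        rw [Multiset.sum_zero] at hsum
        have h1 := (hβ.indec j).1.1
        have h2' := (hβ.indec (j + t)).1.1
        have hh : emb1 D α = emb1 D (β j) + emb1 D (β (j + t)) := by rw [hα, emb1_add]
        rw [← hsum] at hh
        have h0 : emb1 D (0 : OK) = 0 := by simp [emb1]
        rw [h0] at hh
        linarith
      obtain ⟨p, hp⟩ := Multiset.exists_mem_of_ne_zero hs0
      obtain ⟨s1, rfl⟩ := Multiset.exists_cons_of_mem hp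
      by_cases hs1 : s1 = 0
      · exfalso
        subst hs1
        have hip := hind p (Multiset.mem_cons_self _ _)
        refine hip.2 ⟨β j, β (j + t), (hβ.indec j).1, (hβ.indec (j + t)).1, ?_⟩
        have hpα : p = α := by simpa using hsum
        rw [hpα, hα]
      obtain ⟨q, hq⟩ := Multiset.exists_mem_of_ne_zero hs1
      obtain ⟨s2, rfl⟩ := Multiset.exists_cons_of_mem hq
      obtain ⟨ia, hia⟩ := hβ.surj p (hind p (Multiset.mem_cons_self _ _))
      obtain ⟨ib, hib⟩ :=
        hβ.surj q (hind q (Multiset.mem_cons_of_mem (Multiset.mem_cons_self _ _)))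
      subst hia
      subst hib
      rw [Multiset.sum_cons, Multiset.sum_cons] at hsum
      have hpos1 : 0 ≤ emb1 D s2.sum :=
        sum_emb1_nonneg D s2 (fun z hz => (hind z (by simp [hz])).1.1)
      have hpos2 : 0 ≤ emb2 D s2.sum :=
        sum_emb2_nonneg D s2 (fun z hz => (hind z (by simp [hz])).1.2)
      have hx : emb1 D (β ia) + emb1 D (β ib) ≤ emb1 D α := by
        have hc := congrArg (emb1 D) hsum
        rw [emb1_add, emb1_add] at hc
        linarith
      have hy : emb2 D (β ia) + emb2 D (β ib) ≤ emb2 D α := by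
        have hc := congrArg (emb2 D) hsum
        rw [emb2_add, emb2_add] at hc
        linarith
      obtain ⟨k, hk1, hk2, hor⟩ :=
        pair_classify hβ j t k0 ht0 ht1 hk0 hbig α Tz ia ib hx hy
      have hab : β ia + β ib = α := by
        rcases hor with ⟨rfl, rfl⟩ | ⟨rfl, rfl⟩
        · exact Tz k hk1 hk2
        · rw [add_comm]; exact Tz k hk1 hk2
      rw [← add_assoc, hab] at hsum
      have hzero : s2.sum = 0 := add_left_cancel (by rw [hsum, add_zero])
      have hs2 : s2 = 0 := by
        by_contra hne
        obtain ⟨r, hr⟩ := Multiset.exists_mem_of_ne_zero hne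
        obtain ⟨s3, rfl⟩ := Multiset.exists_cons_of_mem hr
        have h1 : 0 < emb1 D r := (hind r (by simp)).1.1
        have h3 : 0 ≤ emb1 D s3.sum :=
          sum_emb1_nonneg D s3 (fun z hz => (hind z (by simp [hz])).1.1)
        have hc := congrArg (emb1 D) hzero
        rw [Multiset.sum_cons, emb1_add] at hc
        have h0 : emb1 D (0 : OK) = 0 := by simp [emb1]
        rw [h0] at hc
        linarith
      subst hs2
      refine ⟨k, ⟨hk1, hk2⟩, ?_⟩
      rcases hor with ⟨rfl, rfl⟩ | ⟨rfl, rfl⟩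
      · rfl
      · exact Multiset.pair_comm _ _
    · rintro ⟨k, ⟨hk1, hk2⟩, rfl⟩
      refine ⟨?_, ?_⟩
      · intro z hz
        simp only [Multiset.insert_eq_cons, Multiset.mem_cons, Multiset.mem_singleton] at hz
        rcases hz with rfl | rfl <;> exact hβ.indec _
      · show ({β (j - k), β (j + k + t)} : Multiset OK).sum = α
        rw [Multiset.insert_eq_cons, Multiset.sum_cons, Multiset.sum_singleton]
        exact Tz k hk1 hk2
  refine ⟨?_, hset⟩
  have hβinj : Function.Injective β := fun i i' hii =>
    hβ.mono.injective (congrArg (emb1 D) hii)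
  have hinj : Set.InjOn (fun k : ℤ => ({β (j - k), β (j + k + t)} : Multiset OK))
      {k : ℤ | 0 ≤ k ∧ k ≤ k0 + 1} := by
    intro k hk k' hk' he
    simp only [Set.mem_setOf_eq] at hk hk'
    have he' : ({β (j - k), β (j + k + t)} : Multiset OK) = {β (j - k'), β (j + k' + t)} := he
    have hmem : β (j - k) ∈ ({β (j - k'), β (j + k' + t)} : Multiset OK) := by
      rw [← he']; simp
    simp only [Multiset.insert_eq_cons, Multiset.mem_cons, Multiset.mem_singleton] at hmem
    rcases hmem with h | h
    · have := hβinj h; omega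
    · have := hβinj h; omega
  rw [pKI, hset, Set.ncard_image_of_injOn hinj]
  have hIcc : {k : ℤ | 0 ≤ k ∧ k ≤ k0 + 1} = ↑(Finset.Icc (0:ℤ) (k0 + 1)) := by
    ext z
    simp [Finset.coe_Icc, Set.mem_Icc]
  rw [hIcc, Set.ncard_coe_finset, Int.card_Icc]
  omega
end
end

section
/- Let K = ℚ(√D) with D ≥ 2 squarefree, with continued fraction expansion ω_D = [⌈u_0/2⌉; \overline{u_1, ..., u_s}]. Let B = max{u_i : i ≥ 1 odd}. Then for every integer m with 1 ≤ m ≤ ⌊B/2⌋ + 2 there exists a totally positive α ∈ O_K with exactly m partitions into totally positive elements, i.e. {1, 2, ..., ⌊B/2⌋+2} ⊆ p_K(O_K^+). -/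
noncomputable section

namespace Stmt5

def tau (D : ℕ) : ℤ := if D % 4 = 1 then 1 else 0

/-- Convergents, shifted: `A 0 = α_{-1} = 1`, `A (n+1) = α_n`. -/
def A (D : ℕ) (u : ℕ → ℕ) : ℕ → OK
  | 0 => (1, 0)
  | 1 => (⌊omegaD D⌋ - tau D, 1)
  | n+2 => (u (n+1) : ℤ) • A D u (n+1) + A D u n

variable {D : ℕ} {u : ℕ → ℕ} {γ : ℕ → ℝ}

lemma conj_eq (D : ℕ) : omegaD' D = (tau D : ℝ) - omegaD D := by
  unfold omegaD omegaD' tau; split <;> push_cast <;> ring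

lemma sqrtD_pos (hD : 2 ≤ D) : 0 < Real.sqrt D := by
  apply Real.sqrt_pos.2; exact_mod_cast Nat.lt_of_lt_of_le Nat.zero_lt_two hD

lemma omega_gt_one (hD : 2 ≤ D) : 1 < omegaD D := by
  unfold omegaD
  split
  · rename_i h
    have h5 : 5 ≤ D := by omega
    have : (2:ℝ) < Real.sqrt D := by
      rw [Real.lt_sqrt (by norm_num)]
      norm_num
      exact_mod_cast Nat.lt_of_lt_of_le (by norm_num) h5
    linarith
  · rw [show (1:ℝ) = Real.sqrt 1 by simp [Real.sqrt_one]]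
    apply Real.sqrt_lt_sqrt (by norm_num)
    exact_mod_cast Nat.lt_of_lt_of_le Nat.one_lt_two hD

lemma floor_omega_pos (hD : 2 ≤ D) : 1 ≤ ⌊omegaD D⌋ := by
  rw [Int.le_floor]
  exact_mod_cast (omega_gt_one hD).le

lemma emb1_add (a b : OK) : emb1 D (a + b) = emb1 D a + emb1 D b := by
  simp [emb1, Prod.fst_add, Prod.snd_add]; push_cast; ring

lemma emb2_add (a b : OK) : emb2 D (a + b) = emb2 D a + emb2 D b := by
  simp [emb2, Prod.fst_add, Prod.snd_add]; push_cast; ring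

lemma emb1_zsmul (n : ℤ) (a : OK) : emb1 D (n • a) = n * emb1 D a := by
  simp [emb1, Prod.smul_fst, Prod.smul_snd, smul_eq_mul]; push_cast; ring

lemma emb2_zsmul (n : ℤ) (a : OK) : emb2 D (n • a) = n * emb2 D a := by
  simp [emb2, Prod.smul_fst, Prod.smul_snd, smul_eq_mul]; push_cast; ring

lemma u_one_le (hCF : CFData D u γ) : ∀ i, 1 ≤ i → 1 ≤ u i := by
  intro i hi
  have h1 := hCF.floor_eq i hi
  have h2 := hCF.one_lt i hi
  have : (1:ℤ) ≤ ⌊γ i⌋ := by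
    rw [Int.le_floor]; exact_mod_cast h2.le
  omega

lemma gamma_bounds (hCF : CFData D u γ) (i : ℕ) (hi : 1 ≤ i) :
    (u i : ℝ) < γ i ∧ γ i < u i + 1 := by
  have hs := hCF.step i hi
  have h1 := hCF.one_lt (i+1) (by omega)
  have hpos : 0 < γ (i+1) := by linarith
  have h2 : 0 < 1 / γ (i+1) := by positivity
  have h3 : 1 / γ (i+1) < 1 := by
    rw [div_lt_one hpos]; exact h1
  constructor <;> [linarith; linarith]

/-- `d n = emb2 (A n)` satisfies `d n = -γ (n+1) * d (n+1)`. -/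
lemma dd_rel (hCF : CFData D u γ) (hD : 2 ≤ D) :
    ∀ n, emb2 D (A D u n) = -(γ (n+1)) * emb2 D (A D u (n+1)) := by
  have hγpos : ∀ i, 1 ≤ i → 0 < γ i := fun i hi => lt_trans one_pos (hCF.one_lt i hi)
  intro n
  induction n with
  | zero =>
      have h0 : emb2 D (A D u 0) = 1 := by simp [A, emb2]
      have h1 : emb2 D (A D u 1) = (⌊omegaD D⌋ : ℝ) - omegaD D := by
        simp only [A, emb2]; rw [conj_eq D]; push_cast; ring
      have hh := hCF.head
      have hg1 : 0 < γ 1 := hγpos 1 le_rfl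
      rw [h0, h1]
      have : (⌊omegaD D⌋ : ℝ) - omegaD D = -(1 / γ 1) := by linarith
      rw [this]
      field_simp
  | succ n ih =>
      have hrec : A D u (n+2) = (u (n+1) : ℤ) • A D u (n+1) + A D u n := by
        simp [A]
      have hlin : emb2 D (A D u (n+2))
          = (u (n+1) : ℝ) * emb2 D (A D u (n+1)) + emb2 D (A D u n) := by
        rw [hrec, emb2_add, emb2_zsmul]; push_cast; ring
      have hstep := hCF.step (n+1) (by omega)
      have hg2 : 0 < γ (n+2) := hγpos (n+2) (by omega)
      rw [ih] at hlin
      -- emb2 (A (n+2)) = (u(n+1) - γ(n+1)) * emb2 (A (n+1)) = -(1/γ(n+2)) * emb2 (A (n+1))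
      have : emb2 D (A D u (n+2)) = -(1 / γ (n+2)) * emb2 D (A D u (n+1)) := by
        rw [hlin, hstep]; ring
      rw [this]
      field_simp

lemma dd_sign (hCF : CFData D u γ) (hD : 2 ≤ D) :
    ∀ n, 0 < (-1 : ℝ)^n * emb2 D (A D u n) := by
  intro n
  induction n with
  | zero => simp [A, emb2]
  | succ n ih =>
      have hrel := dd_rel hCF hD n
      have hg : 0 < γ (n+1) := lt_trans one_pos (hCF.one_lt (n+1) (by omega))
      have : emb2 D (A D u (n+1)) = -(emb2 D (A D u n)) / γ (n+1) := by
        field_simp at hrel ⊢; linarith [hrel]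
      rw [this, pow_succ]
      rw [div_eq_mul_inv]
      have hinv : 0 < (γ (n+1))⁻¹ := by positivity
      nlinarith [ih]

lemma XX_pos (hCF : CFData D u γ) (hD : 2 ≤ D) :
    ∀ n, 0 < emb1 D (A D u n) ∧ emb1 D (A D u n) < emb1 D (A D u (n+1)) := by
  have hω := omega_gt_one hD
  have hfl := floor_omega_pos hD
  have h1 : emb1 D (A D u 1) = (⌊omegaD D⌋ : ℝ) - tau D + omegaD D := by
    simp only [A, emb1]; push_cast; ring
  have htau : (tau D : ℝ) ≤ 1 := by unfold tau; split <;> norm_num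
  have hX1 : 1 < emb1 D (A D u 1) := by
    rw [h1]
    have : (1:ℝ) ≤ (⌊omegaD D⌋ : ℝ) := by exact_mod_cast hfl
    linarith
  intro n
  induction n with
  | zero => simpa [A, emb1] using hX1
  | succ n ih =>
      obtain ⟨hpos, hlt⟩ := ih
      have hrec : A D u (n+2) = (u (n+1) : ℤ) • A D u (n+1) + A D u n := by simp [A]
      have hlin : emb1 D (A D u (n+2))
          = (u (n+1) : ℝ) * emb1 D (A D u (n+1)) + emb1 D (A D u n) := by
        rw [hrec, emb1_add, emb1_zsmul]; push_cast; ring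
      have hu : (1:ℝ) ≤ (u (n+1) : ℝ) := by exact_mod_cast u_one_le hCF (n+1) (by omega)
      constructor
      · linarith
      · rw [hlin]; nlinarith

lemma Q_pos (hCF : CFData D u γ) :
    ∀ n, 0 ≤ (A D u n).2 ∧ 1 ≤ (A D u (n+1)).2 := by
  intro n
  induction n with
  | zero => simp [A]
  | succ n ih =>
      obtain ⟨h0, h1⟩ := ih
      have hrec : A D u (n+2) = (u (n+1) : ℤ) • A D u (n+1) + A D u n := by simp [A]
      have hu : (1:ℤ) ≤ (u (n+1) : ℤ) := by exact_mod_cast u_one_le hCF (n+1) (by omega)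
      constructor
      · omega
      · rw [hrec]
        simp only [Prod.snd_add, Prod.smul_snd, smul_eq_mul]
        nlinarith

lemma det_eq (D : ℕ) (u : ℕ → ℕ) :
    ∀ n, (A D u n).1 * (A D u (n+1)).2 - (A D u n).2 * (A D u (n+1)).1 = (-1)^n := by
  intro n
  induction n with
  | zero => simp [A]
  | succ n ih =>
      have hrec : A D u (n+2) = (u (n+1) : ℤ) • A D u (n+1) + A D u n := by simp [A]
      rw [hrec]
      simp only [Prod.snd_add, Prod.fst_add, Prod.smul_snd, Prod.smul_fst, smul_eq_mul]
      rw [pow_succ]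
      nlinarith [ih]


/-- The `s`-coordinate in the basis `(A j, A (j+1))` (for even `j`, i.e. det 1). -/
def sC (D : ℕ) (u : ℕ → ℕ) (j : ℕ) : OK →+ ℤ where
  toFun := fun β => β.1 * (A D u (j+1)).2 - β.2 * (A D u (j+1)).1
  map_zero' := by simp
  map_add' := by intro a b; simp [Prod.fst_add, Prod.snd_add]; ring

def tC (D : ℕ) (u : ℕ → ℕ) (j : ℕ) : OK →+ ℤ where
  toFun := fun β => (A D u j).1 * β.2 - (A D u j).2 * β.1
  map_zero' := by simp
  map_add' := by intro a b; simp [Prod.fst_add, Prod.snd_add]; ring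

variable {D : ℕ} {u : ℕ → ℕ} {γ : ℕ → ℝ}

lemma basis_repr {j : ℕ} (hdet : (A D u j).1 * (A D u (j+1)).2
      - (A D u j).2 * (A D u (j+1)).1 = 1) (β : OK) :
    β = sC D u j β • A D u j + tC D u j β • A D u (j+1) := by
  have h1 : β.1 = (sC D u j β) * (A D u j).1 + (tC D u j β) * (A D u (j+1)).1 := by
    simp only [sC, tC, AddMonoidHom.coe_mk, ZeroHom.coe_mk]
    linear_combination (-β.1) * hdet
  have h2 : β.2 = (sC D u j β) * (A D u j).2 + (tC D u j β) * (A D u (j+1)).2 := by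
    simp only [sC, tC, AddMonoidHom.coe_mk, ZeroHom.coe_mk]
    linear_combination (-β.2) * hdet
  ext
  · simpa [Prod.fst_add, Prod.smul_fst, smul_eq_mul] using h1
  · simpa [Prod.snd_add, Prod.smul_snd, smul_eq_mul] using h2

lemma sC_Aj {j : ℕ} (hdet : (A D u j).1 * (A D u (j+1)).2
      - (A D u j).2 * (A D u (j+1)).1 = 1) : sC D u j (A D u j) = 1 := by
  simpa [sC] using hdet

lemma sC_Aj1 (j : ℕ) : sC D u j (A D u (j+1)) = 0 := by
  simp [sC]; ring

lemma tC_Aj (j : ℕ) : tC D u j (A D u j) = 0 := by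
  simp [tC]; ring

lemma tC_Aj1 {j : ℕ} (hdet : (A D u j).1 * (A D u (j+1)).2
      - (A D u j).2 * (A D u (j+1)).1 = 1) : tC D u j (A D u (j+1)) = 1 := by
  simp only [tC, AddMonoidHom.coe_mk, ZeroHom.coe_mk]
  linarith [hdet]

/-- Total positivity of semiconvergents `A j + t • A (j+1)` for `0 ≤ t ≤ u (j+1)`. -/
lemma tp_semiconv (hCF : CFData D u γ) (hD : 2 ≤ D) {j : ℕ} (hj : Even j)
    (t : ℤ) (h0 : 0 ≤ t) (hB : t ≤ (u (j+1) : ℤ)) :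
    TotPos D (A D u j + t • A D u (j+1)) := by
  have hX := XX_pos hCF hD j
  have hX1 := XX_pos hCF hD (j+1)
  have hd := dd_rel hCF hD j
  have hdsj := dd_sign hCF hD j
  have hdsj1 := dd_sign hCF hD (j+1)
  have hje : (-1 : ℝ)^j = 1 := hj.neg_one_pow
  have hjo : (-1 : ℝ)^(j+1) = -1 := by rw [pow_succ, hje]; ring
  rw [hje, one_mul] at hdsj
  rw [hjo] at hdsj1
  have hd1neg : emb2 D (A D u (j+1)) < 0 := by nlinarith
  have hγ := gamma_bounds hCF (j+1) (by omega)
  constructor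
  · rw [emb1_add, emb1_zsmul]
    have : (0:ℝ) ≤ t := by exact_mod_cast h0
    nlinarith [hX.1, hX1.1]
  · rw [emb2_add, emb2_zsmul]
    have htr : (t:ℝ) ≤ (u (j+1) : ℝ) := by exact_mod_cast hB
    have htγ : (t:ℝ) < γ (j+1) := lt_of_le_of_lt htr hγ.1
    nlinarith [mul_pos (sub_pos.2 htγ) (neg_pos.2 hd1neg)]

/-- For a totally positive `β`, the `s`-coordinate is at least 1. -/
lemma sC_one_le (hCF : CFData D u γ) (hD : 2 ≤ D) {j : ℕ} (hj : Even j)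
    (hdet : (A D u j).1 * (A D u (j+1)).2 - (A D u j).2 * (A D u (j+1)).1 = 1)
    {β : OK} (hβ : TotPos D β) : 1 ≤ sC D u j β := by
  have hrepr := basis_repr hdet β
  have hX := XX_pos hCF hD j
  have hX1 := XX_pos hCF hD (j+1)
  have hdsj := dd_sign hCF hD j
  have hdsj1 := dd_sign hCF hD (j+1)
  have hje : (-1 : ℝ)^j = 1 := hj.neg_one_pow
  have hjo : (-1 : ℝ)^(j+1) = -1 := by rw [pow_succ, hje]; ring
  rw [hje, one_mul] at hdsj
  rw [hjo] at hdsj1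
  have hd1neg : emb2 D (A D u (j+1)) < 0 := by nlinarith
  set s := sC D u j β with hs
  set t := tC D u j β with ht
  have he1 : emb1 D β = (s:ℝ) * emb1 D (A D u j) + (t:ℝ) * emb1 D (A D u (j+1)) := by
    conv_lhs => rw [hrepr]
    rw [emb1_add, emb1_zsmul, emb1_zsmul]
  have he2 : emb2 D β = (s:ℝ) * emb2 D (A D u j) + (t:ℝ) * emb2 D (A D u (j+1)) := by
    conv_lhs => rw [hrepr]
    rw [emb2_add, emb2_zsmul, emb2_zsmul]
  by_contra hcon
  push_neg at hcon
  have hsz : s ≤ 0 := by omega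
  have hsr : (s:ℝ) ≤ 0 := by exact_mod_cast hsz
  rcases le_or_gt 0 t with htp | htn
  · have htr : (0:ℝ) ≤ (t:ℝ) := by exact_mod_cast htp
    have : emb2 D β ≤ 0 := by nlinarith
    linarith [hβ.2]
  · have htz : t ≤ -1 := by omega
    have htr : (t:ℝ) ≤ -1 := by exact_mod_cast htz
    have : emb1 D β < 0 := by nlinarith [hX.1, hX1.1]
    linarith [hβ.1]

/-- For a totally positive `β` with `s`-coordinate 1, the `t`-coordinate lies in `[0, u (j+1)]`. -/
lemma tC_range (hCF : CFData D u γ) (hD : 2 ≤ D) {j : ℕ} (hj : Even j)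
    (hdet : (A D u j).1 * (A D u (j+1)).2 - (A D u j).2 * (A D u (j+1)).1 = 1)
    {β : OK} (hβ : TotPos D β) (hs1 : sC D u j β = 1) :
    0 ≤ tC D u j β ∧ tC D u j β ≤ (u (j+1) : ℤ) := by
  have hrepr := basis_repr hdet β
  rw [hs1, one_smul] at hrepr
  have hX := XX_pos hCF hD j
  have hX1 := XX_pos hCF hD (j+1)
  have hdsj := dd_sign hCF hD j
  have hdsj1 := dd_sign hCF hD (j+1)
  have hd := dd_rel hCF hD j
  have hje : (-1 : ℝ)^j = 1 := hj.neg_one_pow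
  have hjo : (-1 : ℝ)^(j+1) = -1 := by rw [pow_succ, hje]; ring
  rw [hje, one_mul] at hdsj
  rw [hjo] at hdsj1
  have hd1neg : emb2 D (A D u (j+1)) < 0 := by nlinarith
  have hγ := gamma_bounds hCF (j+1) (by omega)
  set t := tC D u j β with ht
  have he1 : emb1 D β = emb1 D (A D u j) + (t:ℝ) * emb1 D (A D u (j+1)) := by
    conv_lhs => rw [hrepr]
    rw [emb1_add, emb1_zsmul]
  have he2 : emb2 D β = emb2 D (A D u j) + (t:ℝ) * emb2 D (A D u (j+1)) := by
    conv_lhs => rw [hrepr]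
    rw [emb2_add, emb2_zsmul]
  constructor
  · by_contra hcon
    push_neg at hcon
    have htz : t ≤ -1 := by omega
    have htr : (t:ℝ) ≤ -1 := by exact_mod_cast htz
    have : emb1 D β < 0 := by nlinarith [hX.1, hX.2, hX1.1]
    linarith [hβ.1]
  · by_contra hcon
    push_neg at hcon
    have htr : (u (j+1) : ℝ) + 1 ≤ (t:ℝ) := by exact_mod_cast hcon
    have htγ : γ (j+1) < (t:ℝ) := lt_of_lt_of_le hγ.2 htr
    have : emb2 D β < 0 := by nlinarith [mul_pos (sub_pos.2 htγ) (neg_pos.2 hd1neg)]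
    linarith [hβ.2]

lemma tp_add {D : ℕ} {a b : OK} (ha : TotPos D a) (hb : TotPos D b) : TotPos D (a + b) := by
  constructor
  · rw [emb1_add]; exact add_pos ha.1 hb.1
  · rw [emb2_add]; exact add_pos ha.2 hb.2

/-- Integer trace. -/
def trZ (D : ℕ) : OK →+ ℤ where
  toFun := fun β => 2 * β.1 + tau D * β.2
  map_zero' := by simp
  map_add' := by intro a b; simp [Prod.fst_add, Prod.snd_add]; ring

lemma trZ_cast (D : ℕ) (β : OK) : ((trZ D β : ℤ) : ℝ) = emb1 D β + emb2 D β := by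
  have hc : omegaD' D = (tau D : ℝ) - omegaD D := conj_eq D
  simp only [trZ, AddMonoidHom.coe_mk, ZeroHom.coe_mk, emb1, emb2, hc]
  push_cast; ring

lemma trZ_one_le {D : ℕ} {β : OK} (hβ : TotPos D β) : 1 ≤ trZ D β := by
  have h : (0:ℝ) < ((trZ D β : ℤ) : ℝ) := by
    rw [trZ_cast]; exact add_pos hβ.1 hβ.2
  exact_mod_cast Int.cast_pos.mp h

/-- Integer norm coefficient. -/
def kZ (D : ℕ) : ℤ := if D % 4 = 1 then -((D/4 : ℕ) : ℤ) else -(D:ℤ)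

/-- Integer norm. -/
def nZ (D : ℕ) (β : OK) : ℤ := β.1^2 + tau D * β.1 * β.2 + kZ D * β.2^2

lemma kZ_cast (D : ℕ) : ((kZ D : ℤ) : ℝ) = omegaD D * omegaD' D := by
  have hmul : Real.sqrt D * Real.sqrt D = (D:ℝ) := Real.mul_self_sqrt (by positivity)
  unfold kZ omegaD omegaD'
  split
  · rename_i h
    have hDq : D = 4*(D/4) + 1 := by omega
    have hk : (D:ℝ) = 4*(((D/4 : ℕ) : ℤ):ℝ) + 1 := by exact_mod_cast hDq
    rw [Int.cast_neg]
    linear_combination (1/4 : ℝ) * hmul + (1/4 : ℝ) * hk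
  · push_cast
    linear_combination hmul

lemma nZ_cast (D : ℕ) (β : OK) : ((nZ D β : ℤ) : ℝ) = emb1 D β * emb2 D β := by
  have hsum : omegaD D + omegaD' D = (tau D : ℝ) := by rw [conj_eq]; ring
  have hexp : emb1 D β * emb2 D β
      = (β.1:ℝ)^2 + (tau D:ℝ)*(β.1:ℝ)*(β.2:ℝ) + (omegaD D * omegaD' D)*(β.2:ℝ)^2 := by
    unfold emb1 emb2
    linear_combination ((β.1:ℝ)*(β.2:ℝ)) * hsum
  rw [hexp, ← kZ_cast]
  unfold nZ
  push_cast
  ring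

lemma nZ_one_le {D : ℕ} {β : OK} (hβ : TotPos D β) : 1 ≤ nZ D β := by
  have h : (0:ℝ) < ((nZ D β : ℤ) : ℝ) := by
    rw [nZ_cast]; exact mul_pos hβ.1 hβ.2
  exact_mod_cast Int.cast_pos.mp h

lemma pair_cases {α : Type*} {a b c d : α} (h : ({a, b} : Multiset α) = {c, d}) :
    (a = c ∧ b = d) ∨ (a = d ∧ b = c) := by
  have h' : a ::ₘ ({b} : Multiset α) = c ::ₘ {d} := h
  rcases Multiset.cons_eq_cons.1 h' with ⟨h1, h2⟩ | ⟨_, cs, h1, h2⟩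
  · left; exact ⟨h1, by simpa using h2⟩
  · rcases (Multiset.singleton_eq_cons_iff _).1 h1 with ⟨hb, hcs⟩
    subst hcs
    rcases (Multiset.singleton_eq_cons_iff _).1 h2 with ⟨hd, -⟩
    right; exact ⟨hd.symm, hb⟩

end Stmt5

open Stmt5

/-- `{1, …, ⌊B/2⌋ + 2} ⊆ p_K(O_K^+)` where `B` is the largest
odd-indexed continued fraction coefficient. -/

theorem stmt5 (D : ℕ) (hD : 2 ≤ D) (hsq : Squarefree D)
    (u : ℕ → ℕ) (γ : ℕ → ℝ) (hCF : CFData D u γ)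
    (B : ℕ) (hub : ∀ i, 1 ≤ i → Odd i → u i ≤ B)
    (hmax : ∃ i, 1 ≤ i ∧ Odd i ∧ u i = B)
    (m : ℕ) (hm1 : 1 ≤ m) (hm2 : m ≤ B / 2 + 2) :
    ∃ α : OK, TotPos D α ∧ pK D α = m := by
  classical
  rcases Nat.lt_or_ge m 2 with hm | hm
  · -- the case m = 1 : take α = 1
    have hm' : m = 1 := by omega
    subst hm'
    refine ⟨((1:ℤ), (0:ℤ)), ⟨by simp [emb1], by simp [emb2]⟩, ?_⟩
    have hset : {s : Multiset OK | (∀ x ∈ s, TotPos D x) ∧ s.sum = ((1:ℤ), (0:ℤ))}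
        = {({((1:ℤ), (0:ℤ))} : Multiset OK)} := by
      ext s
      simp only [Set.mem_setOf_eq, Set.mem_singleton_iff]
      constructor
      · rintro ⟨hTP, hsum⟩
        have hmap : (s.map (trZ D)).sum = 2 := by
          rw [← map_multiset_sum, hsum]
          simp [trZ, tau]
        have hall : ∀ x ∈ s.map (trZ D), (1:ℤ) ≤ x := by
          intro x hx
          rcases Multiset.mem_map.1 hx with ⟨β, hβ, rfl⟩
          exact trZ_one_le (hTP β hβ)
        have hcard : Multiset.card s ≤ 2 := by
          have h2 := Multiset.card_nsmul_le_sum hall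
          rw [hmap, Multiset.card_map] at h2
          simp only [nsmul_eq_mul, mul_one] at h2
          exact_mod_cast h2
        have hcard0 : Multiset.card s ≠ 0 := by
          intro h
          rw [Multiset.card_eq_zero] at h
          subst h
          simp [Prod.ext_iff] at hsum
        have hc12 : Multiset.card s = 1 ∨ Multiset.card s = 2 := by omega
        rcases hc12 with h | h
        · obtain ⟨a, rfl⟩ := Multiset.card_eq_one.1 h
          rw [Multiset.sum_singleton] at hsum
          rw [hsum]
        · exfalso
          obtain ⟨a, b, rfl⟩ := Multiset.card_eq_two.1 h
          have ha : TotPos D a := hTP a (by simp)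
          have hb : TotPos D b := hTP b (by simp)
          have hsum2 : trZ D a + trZ D b = 2 := by simpa using hmap
          have hta : trZ D a = 1 := by
            have h1 := trZ_one_le ha
            have h2 := trZ_one_le hb
            omega
          have hna := nZ_one_le ha
          have hnar : (1:ℝ) ≤ emb1 D a * emb2 D a := by
            rw [← nZ_cast]; exact_mod_cast hna
          have htar : emb1 D a + emb2 D a = 1 := by
            rw [← trZ_cast, hta]; norm_num
          nlinarith [ha.1, ha.2, sq_nonneg (emb1 D a - emb2 D a)]
      · rintro rfl
        refine ⟨?_, by simp⟩
        intro x hx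
        rw [Multiset.mem_singleton] at hx
        subst hx
        exact ⟨by simp [emb1], by simp [emb2]⟩
    unfold pK
    rw [hset, Set.ncard_singleton]
  · -- the main case m ≥ 2
    obtain ⟨i₀, hi₀1, hi₀odd, hi₀B⟩ := hmax
    obtain ⟨sp, hsp1, hsp0, hper⟩ := hCF.period
    obtain ⟨k₀, hk₀⟩ := hi₀odd
    set j : ℕ := i₀ + 2*sp - 1 with hjdef
    have hjeven : Even j := ⟨k₀ + sp, by omega⟩
    have hj1 : 1 ≤ j := by omega
    have huB : u (j+1) = B := by
      have h1 := hper i₀ hi₀1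
      have h2 := hper (i₀ + sp) (by omega)
      have h3 : j + 1 = i₀ + sp + sp := by omega
      rw [h3, h2, h1, hi₀B]
    set r : ℕ := m - 2 with hrdef
    have hrm : m = r + 2 := by omega
    have h2rB : 2*r ≤ B := by omega
    have hdet : (A D u j).1 * (A D u (j+1)).2 - (A D u j).2 * (A D u (j+1)).1 = 1 := by
      rw [det_eq D u j, Even.neg_one_pow hjeven]
    set F : ℤ → OK := fun t => A D u j + t • A D u (j+1) with hFdef
    have hTPF : ∀ t : ℤ, 0 ≤ t → t ≤ 2*(r:ℤ) → TotPos D (F t) := by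
      intro t h0 h2
      have hB' : t ≤ (u (j+1) : ℤ) := by
        have : ((2*r : ℕ) : ℤ) ≤ ((u (j+1) : ℕ) : ℤ) := by
          rw [huB]; exact_mod_cast h2rB
        push_cast at this
        omega
      simp only [hFdef]
      exact tp_semiconv hCF hD hjeven t h0 hB'
    set α : OK := F (r:ℤ) + F (r:ℤ) with hαdef
    have hFsum : ∀ t : ℤ, F t + F (2*(r:ℤ) - t) = α := by
      intro t
      simp only [hαdef, hFdef]
      ext
      · simp only [Prod.fst_add, Prod.smul_fst, smul_eq_mul]; ring
      · simp only [Prod.snd_add, Prod.smul_snd, smul_eq_mul]; ring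
    have hTPα : TotPos D α := by
      rw [hαdef]
      exact tp_add (hTPF (r:ℤ) (by omega) (by omega)) (hTPF (r:ℤ) (by omega) (by omega))
    have hsF : ∀ t : ℤ, sC D u j (F t) = 1 := by
      intro t
      simp only [hFdef]
      rw [map_add, AddMonoidHom.map_zsmul, sC_Aj hdet, sC_Aj1]
      simp
    have htF : ∀ t : ℤ, tC D u j (F t) = t := by
      intro t
      simp only [hFdef]
      rw [map_add, AddMonoidHom.map_zsmul, tC_Aj, tC_Aj1 hdet]
      simp
    have hsα : sC D u j α = 2 := by
      rw [hαdef, map_add, hsF]; norm_num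
    have htα : tC D u j α = 2*(r:ℤ) := by
      rw [hαdef, map_add, htF]
      ring
    set T : Finset (Multiset OK) :=
      insert {α} ((Finset.range (r+1)).image
        (fun t : ℕ => ({F (t:ℤ), F (2*(r:ℤ) - (t:ℤ))} : Multiset OK))) with hTdef
    have hset : {s : Multiset OK | (∀ x ∈ s, TotPos D x) ∧ s.sum = α} = ↑T := by
      ext s
      simp only [hTdef, Set.mem_setOf_eq, Finset.coe_insert, Set.mem_insert_iff,
        Finset.coe_image, Set.mem_image, Finset.mem_coe, Finset.mem_range]
      constructor
      · rintro ⟨hTP, hsum⟩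
        have hmap : (s.map (sC D u j)).sum = 2 := by
          rw [← map_multiset_sum, hsum, hsα]
        have htmap : (s.map (tC D u j)).sum = 2*(r:ℤ) := by
          rw [← map_multiset_sum, hsum, htα]
        have hall : ∀ x ∈ s.map (sC D u j), (1:ℤ) ≤ x := by
          intro x hx
          rcases Multiset.mem_map.1 hx with ⟨β, hβ, rfl⟩
          exact sC_one_le hCF hD hjeven hdet (hTP β hβ)
        have hcard : Multiset.card s ≤ 2 := by
          have h2 := Multiset.card_nsmul_le_sum hall
          rw [hmap, Multiset.card_map] at h2
          simp only [nsmul_eq_mul, mul_one] at h2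
          exact_mod_cast h2
        have hcard0 : Multiset.card s ≠ 0 := by
          intro h
          rw [Multiset.card_eq_zero] at h
          subst h
          simp at hmap
        have hc12 : Multiset.card s = 1 ∨ Multiset.card s = 2 := by omega
        rcases hc12 with h | h
        · obtain ⟨a, rfl⟩ := Multiset.card_eq_one.1 h
          left
          rw [Multiset.sum_singleton] at hsum
          rw [hsum]
        · obtain ⟨a, b, rfl⟩ := Multiset.card_eq_two.1 h
          right
          have ha : TotPos D a := hTP a (by simp)
          have hb : TotPos D b := hTP b (by simp)
          have hsa := sC_one_le hCF hD hjeven hdet ha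
          have hsb := sC_one_le hCF hD hjeven hdet hb
          have hsum2 : sC D u j a + sC D u j b = 2 := by simpa using hmap
          have hsa1 : sC D u j a = 1 := by omega
          have hsb1 : sC D u j b = 1 := by omega
          have hta := tC_range hCF hD hjeven hdet ha hsa1
          have htb := tC_range hCF hD hjeven hdet hb hsb1
          have htsum : tC D u j a + tC D u j b = 2*(r:ℤ) := by simpa using htmap
          have hrepa : a = F (tC D u j a) := by
            have h' := basis_repr hdet a
            rw [hsa1, one_smul] at h'
            simpa only [hFdef] using h'
          have hrepb : b = F (tC D u j b) := by
            have h' := basis_repr hdet b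
            rw [hsb1, one_smul] at h'
            simpa only [hFdef] using h'
          rcases le_total (tC D u j a) (tC D u j b) with hle | hle
          · refine ⟨(tC D u j a).toNat, by omega, ?_⟩
            have h1 : ((tC D u j a).toNat : ℤ) = tC D u j a := Int.toNat_of_nonneg hta.1
            rw [h1]
            have h2 : 2*(r:ℤ) - tC D u j a = tC D u j b := by omega
            rw [h2, ← hrepa, ← hrepb]
          · refine ⟨(tC D u j b).toNat, by omega, ?_⟩
            have h1 : ((tC D u j b).toNat : ℤ) = tC D u j b := Int.toNat_of_nonneg htb.1
            rw [h1]
            have h2 : 2*(r:ℤ) - tC D u j b = tC D u j a := by omega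
            rw [h2, ← hrepa, ← hrepb, Multiset.pair_comm]
      · rintro (rfl | ⟨t, ht, rfl⟩)
        · refine ⟨?_, by simp⟩
          intro x hx
          rw [Multiset.mem_singleton] at hx
          subst hx
          exact hTPα
        · constructor
          · intro x hx
            simp only [Multiset.insert_eq_cons, Multiset.mem_cons, Multiset.mem_singleton] at hx
            rcases hx with rfl | rfl
            · exact hTPF _ (by omega) (by omega)
            · exact hTPF _ (by omega) (by omega)
          · have := hFsum (t:ℤ)
            simpa using this
    have hFinj : ∀ t₁ t₂ : ℤ, F t₁ = F t₂ → t₁ = t₂ := by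
      intro t₁ t₂ h
      have h2 := congrArg Prod.snd h
      simp only [hFdef, Prod.snd_add, Prod.smul_snd, smul_eq_mul] at h2
      have hQ := (Q_pos hCF j).2
      have h3 : t₁ * (A D u (j+1)).2 = t₂ * (A D u (j+1)).2 := by omega
      exact mul_right_cancel₀ (by omega) h3
    have hnotmem : ({α} : Multiset OK) ∉ (Finset.range (r+1)).image
        (fun t : ℕ => ({F (t:ℤ), F (2*(r:ℤ) - (t:ℤ))} : Multiset OK)) := by
      intro h
      rcases Finset.mem_image.1 h with ⟨t, -, hteq⟩
      have hc := congrArg Multiset.card hteq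
      simp at hc
    have hinj : Set.InjOn (fun t : ℕ => ({F (t:ℤ), F (2*(r:ℤ) - (t:ℤ))} : Multiset OK))
        ((Finset.range (r+1)) : Finset ℕ) := by
      intro t₁ h₁ t₂ h₂ heq
      simp only [Finset.coe_range, Set.mem_Iio] at h₁ h₂
      simp only at heq
      rcases pair_cases heq with ⟨e1, -⟩ | ⟨e1, e2⟩
      · have := hFinj _ _ e1
        omega
      · have q1 := hFinj _ _ e1
        have q2 := hFinj _ _ e2
        omega
    have hTcard : T.card = r + 2 := by
      rw [hTdef, Finset.card_insert_of_notMem hnotmem,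
        Finset.card_image_of_injOn hinj, Finset.card_range]
    refine ⟨α, hTPα, ?_⟩
    unfold pK
    rw [hset, Set.ncard_coe_finset, hTcard, hrm]
end
end

section
/- Let K = ℚ(√D) with D ≥ 2 squarefree, with convergents α_i = p_i + q_i ξ_D to ω_D and N_i = |Nm(α_i)|. Writing γ_{i+2} = [u_{i+2}, u_{i+3}, ...] for the tail of the continued fraction of ω_D, one has for all i ≥ -1: N_{i+1} = √Δ/γ_{i+2} - N_i/γ_{i+2}², where Δ is the discriminant of K. Consequently N_i < √Δ/u_{i+1} for all i ≥ -1. -/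
noncomputable section

/-!
Writing `x_i, y_i` for the two real embeddings of `α_i`, both sequences obey the continuant
recurrence `z_{i+2} = u_{i+2} z_{i+1} + z_i`. Hence the cross term `x_{i+1} y_i - x_i y_{i+1}` only
changes sign, and it starts at `ω_D - ω_D' = √Δ`. Comparing the recurrence with
`γ_i = u_i + 1/γ_{i+1}` shows `y_{i+1} γ_{i+2} = -y_i`. Substituting this into the cross term gives
`|y_{i+1}| (γ_{i+2} x_{i+1} + x_i) = √Δ`, which is the norm identity since all `x_i > 0`; the bound
follows from `0 < u_{i+1} < γ_{i+1}`.
-/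

section ContinuantRecurrence

variable {c g x y : ℕ → ℝ}

theorem pos_of_continuant_recurrence (hc : ∀ n, 0 ≤ c n)
    (hx : ∀ n, x (n + 2) = c (n + 1) * x (n + 1) + x n) (h0 : 0 < x 0) (h1 : 0 < x 1) (n : ℕ) :
    0 < x n := by
  induction n using Nat.twoStepInduction with
  | zero => exact h0
  | one => exact h1
  | more n ih₀ ih₁ => rw [hx]; have := hc (n + 1); positivity

theorem cross_term_continuant_recurrence (hx : ∀ n, x (n + 2) = c (n + 1) * x (n + 1) + x n)
    (hy : ∀ n, y (n + 2) = c (n + 1) * y (n + 1) + y n) (n : ℕ) :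
    x (n + 1) * y n - x n * y (n + 1) = (-1) ^ n * (x 1 * y 0 - x 0 * y 1) := by
  induction n with
  | zero => ring
  | succ n ih => rw [hx, hy, pow_succ]; linear_combination -ih

theorem mul_tail_eq_neg_of_continuant_recurrence
    (hy : ∀ n, y (n + 2) = c (n + 1) * y (n + 1) + y n)
    (hg : ∀ n, 1 ≤ n → g n = c n + 1 / g (n + 1)) (hg0 : ∀ n, 1 ≤ n → g n ≠ 0)
    (h1 : y 1 * g 1 = -y 0) (n : ℕ) :
    y (n + 1) * g (n + 1) = -y n := by
  induction n with
  | zero => exact h1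
  | succ n ih =>
    have hc : c (n + 1) = g (n + 1) - 1 / g (n + 2) := by rw [hg (n + 1) (by omega)]; ring
    rw [hy, hc]
    field_simp [hg0 (n + 2) (by omega)]
    linear_combination g (n + 2) * ih

end ContinuantRecurrence

theorem abs_mul_eq_div_sub_of_mul_eq_neg {x₀ x₁ y₀ y₁ g Δ : ℝ} (hg : 0 < g) (hx₀ : 0 < x₀)
    (hx₁ : 0 < x₁) (hy : y₁ * g = -y₀) (hcross : |x₁ * y₀ - x₀ * y₁| = Δ) :
    |x₁ * y₁| = Δ / g - |x₀ * y₀| / g ^ 2 := by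
  obtain rfl : y₀ = -(y₁ * g) := by linarith
  have hΔ : |y₁| * (x₁ * g + x₀) = Δ := by
    rw [← hcross, ← abs_of_pos (by positivity : 0 < x₁ * g + x₀), ← abs_mul, ← abs_neg]
    ring_nf
  rw [abs_mul, abs_mul, abs_neg, abs_mul, abs_of_pos hx₀, abs_of_pos hx₁, abs_of_pos hg, ← hΔ]
  field_simp
  ring

theorem lt_div_of_eq_div_sub {N N' Δ g c : ℝ} (hΔ : 0 < Δ) (hc : 0 < c) (hcg : c < g)
    (hN' : 0 ≤ N') (hN : N = Δ / g - N' / g ^ 2) : N < Δ / c :=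
  calc N ≤ Δ / g := by rw [hN]; linarith [show 0 ≤ N' / g ^ 2 by positivity]
    _ < Δ / c := div_lt_div_of_pos_left hΔ hc hcg

theorem omegaD_add_omegaD' (D : ℕ) : omegaD D + omegaD' D = if D % 4 = 1 then 1 else 0 := by
  unfold omegaD omegaD'
  split <;> ring

theorem omegaD_sub_omegaD' (D : ℕ) : omegaD D - omegaD' D = √(disc D) := by
  unfold omegaD omegaD' disc
  split
  · ring
  · push_cast
    rw [Real.sqrt_mul (by norm_num), show √4 = 2 by rw [show (4 : ℝ) = 2 ^ 2 by norm_num,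
      Real.sqrt_sq (by norm_num)]]
    ring

theorem one_le_omegaD {D : ℕ} (hD : 1 ≤ D) : 1 ≤ omegaD D := by
  have : 1 ≤ √(D : ℝ) := Real.one_le_sqrt.mpr (by exact_mod_cast hD)
  unfold omegaD
  split <;> linarith

theorem one_le_sqrt_disc {D : ℕ} (hD : 1 ≤ D) : 1 ≤ √(disc D : ℝ) := by
  refine Real.one_le_sqrt.mpr ?_
  exact_mod_cast (show 1 ≤ disc D by unfold disc; split <;> omega)

theorem emb1_sub_emb2 (D : ℕ) (b : OK) : emb1 D b - emb2 D b = b.2 * √(disc D) := by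
  rw [← omegaD_sub_omegaD']
  unfold emb1 emb2
  ring

theorem emb1_zsmul_add (D : ℕ) (n : ℤ) (b c : OK) :
    emb1 D (n • b + c) = n * emb1 D b + emb1 D c := by
  simp only [emb1, Prod.fst_add, Prod.snd_add, Prod.smul_fst, Prod.smul_snd, smul_eq_mul]
  push_cast
  ring

theorem emb2_zsmul_add (D : ℕ) (n : ℤ) (b c : OK) :
    emb2 D (n • b + c) = n * emb2 D b + emb2 D c := by
  simp only [emb2, Prod.fst_add, Prod.snd_add, Prod.smul_fst, Prod.smul_snd, smul_eq_mul]
  push_cast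
  ring

namespace CFData

variable {D : ℕ} {u : ℕ → ℕ} {γ : ℕ → ℝ}

theorem gamma_pos (hCF : CFData D u γ) {n : ℕ} (hn : 1 ≤ n) : 0 < γ n :=
  one_pos.trans (hCF.one_lt n hn)

theorem omegaD_sub_floor (hCF : CFData D u γ) : omegaD D - ⌊omegaD D⌋ = 1 / γ 1 := by
  linarith [hCF.head]

theorem u_lt_gamma (hCF : CFData D u γ) {n : ℕ} (hn : 1 ≤ n) : (u n : ℝ) < γ n := by
  rw [hCF.step n hn]
  exact lt_add_of_pos_right _ (one_div_pos.mpr (hCF.gamma_pos (Nat.le_succ_of_le hn)))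

theorem u_zero_eq (hCF : CFData D u γ) :
    (u 0 : ℝ) = √(disc D) - 2 * (omegaD D - ⌊omegaD D⌋) := by
  have hu := congrArg (Int.cast : ℤ → ℝ) hCF.u_zero
  have hsum := omegaD_add_omegaD' D
  have hdiff := omegaD_sub_omegaD' D
  split_ifs at hu hsum <;> push_cast at hu <;> linarith

theorem u_pos (hCF : CFData D u γ) (hD : 1 ≤ D) (n : ℕ) : 0 < u n := by
  rcases Nat.eq_zero_or_pos n with rfl | hn
  · have hfl : (1 : ℤ) ≤ ⌊omegaD D⌋ := Int.le_floor.mpr (by exact_mod_cast one_le_omegaD hD)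
    have hu := hCF.u_zero
    split_ifs at hu <;> omega
  · have hfl : (1 : ℤ) ≤ ⌊γ n⌋ := Int.le_floor.mpr (by exact_mod_cast (hCF.one_lt n hn).le)
    have hu := hCF.floor_eq n hn
    omega

theorem u_zero_lt_sqrt_disc (hCF : CFData D u γ) : (u 0 : ℝ) < √(disc D) := by
  rw [hCF.u_zero_eq, hCF.omegaD_sub_floor]
  linarith [one_div_pos.mpr (hCF.gamma_pos le_rfl)]

end CFData

namespace ConvData

variable {D : ℕ} {u : ℕ → ℕ} {γ : ℕ → ℝ} {a : ℤ → OK}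

theorem emb1_neg_one (h : ConvData D u a) : emb1 D (a (-1)) = 1 := by simp [h.neg_one, emb1]

theorem emb2_neg_one (h : ConvData D u a) : emb2 D (a (-1)) = 1 := by simp [h.neg_one, emb2]

theorem snd_zero (h : ConvData D u a) : (a 0).2 = 1 := by rw [h.zero]; split <;> rfl

theorem emb2_zero (h : ConvData D u a) : emb2 D (a 0) = ⌊omegaD D⌋ - omegaD D := by
  have hsum := omegaD_add_omegaD' D
  rw [h.zero, emb2]
  split_ifs at hsum ⊢ <;> simp only [Prod.fst_add, Prod.snd_add] <;> push_cast <;> linarith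

theorem recur_shift (h : ConvData D u a) (n : ℕ) :
    a ((n + 2 : ℕ) - 1) = (u (n + 1) : ℤ) • a ((n + 1 : ℕ) - 1) + a (n - 1) := by
  have := h.recur (n - 1) (by omega)
  rw [show ((n : ℤ) - 1 + 2).toNat = n + 1 by omega] at this
  rwa [show ((n + 2 : ℕ) : ℤ) - 1 = n - 1 + 2 by omega,
    show ((n + 1 : ℕ) : ℤ) - 1 = n - 1 + 1 by omega]

theorem abs_Nm_eq_sqrt_disc_div_sub (hD : 1 ≤ D) (hCF : CFData D u γ) (h : ConvData D u a) (n : ℕ) :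
    |Nm D (a n)| = √(disc D) / γ (n + 1) - |Nm D (a (n - 1))| / γ (n + 1) ^ 2 := by
  set x : ℕ → ℝ := fun n => emb1 D (a (n - 1))
  set y : ℕ → ℝ := fun n => emb2 D (a (n - 1))
  have hx : ∀ n, x (n + 2) = u (n + 1) * x (n + 1) + x n := fun n => by
    simp only [x, h.recur_shift, emb1_zsmul_add, Int.cast_natCast]
  have hy : ∀ n, y (n + 2) = u (n + 1) * y (n + 1) + y n := fun n => by
    simp only [y, h.recur_shift, emb2_zsmul_add, Int.cast_natCast]
  have hx0 : x 0 = 1 := by simpa [x] using h.emb1_neg_one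
  have hy0 : y 0 = 1 := by simpa [y] using h.emb2_neg_one
  have hy1 : y 1 = ⌊omegaD D⌋ - omegaD D := by simpa [y] using h.emb2_zero
  have hxy1 : x 1 - y 1 = √(disc D) := by simp [x, y, emb1_sub_emb2, h.snd_zero]
  have hfract := hCF.omegaD_sub_floor
  have hγ1 := hCF.one_lt 1 le_rfl
  have hxpos : ∀ n, 0 < x n := by
    refine pos_of_continuant_recurrence (fun n => (u n).cast_nonneg) hx (hx0 ▸ one_pos) ?_
    have : 1 / γ 1 < 1 := (div_lt_one (by linarith)).mpr hγ1
    linarith [one_le_sqrt_disc hD]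
  have htail := mul_tail_eq_neg_of_continuant_recurrence hy hCF.step
    (fun n hn => (hCF.gamma_pos hn).ne') (by rw [hy1, hy0, ← neg_sub, hfract]; field_simp) n
  have hcross : |x (n + 1) * y n - x n * y (n + 1)| = √(disc D) := by
    rw [cross_term_continuant_recurrence (c := fun n => (u n : ℝ)) hx hy n, hx0, hy0, mul_one,
      one_mul, hxy1, abs_mul, abs_pow, abs_neg, abs_one, one_pow, one_mul,
      abs_of_nonneg (Real.sqrt_nonneg _)]
  simpa [x, y, Nm] using abs_mul_eq_div_sub_of_mul_eq_neg (hCF.gamma_pos n.succ_pos) (hxpos n)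
    (hxpos (n + 1)) htail hcross

theorem abs_Nm_lt_sqrt_disc_div (hD : 1 ≤ D) (hCF : CFData D u γ) (h : ConvData D u a) (n : ℕ) :
    |Nm D (a (n - 1))| < √(disc D) / u n := by
  have hu := Nat.cast_pos (α := ℝ) |>.mpr (hCF.u_pos hD n)
  rcases n with _ | m
  · rw [lt_div_iff₀ hu]
    simpa [Nm, h.emb1_neg_one, h.emb2_neg_one] using hCF.u_zero_lt_sqrt_disc
  rw [show ((m + 1 : ℕ) : ℤ) - 1 = m by omega]
  exact lt_div_of_eq_div_sub (by linarith [one_le_sqrt_disc hD]) hu (hCF.u_lt_gamma m.succ_pos)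
    (abs_nonneg _) (h.abs_Nm_eq_sqrt_disc_div_sub hD hCF m)

end ConvData

theorem stmt7_general (D : ℕ) (hD : 2 ≤ D)
    (u : ℕ → ℕ) (γ : ℕ → ℝ) (hCF : CFData D u γ)
    (a : ℤ → OK) (hconv : ConvData D u a) :
    (∀ i : ℤ, -1 ≤ i →
      |Nm D (a (i + 1))| =
        Real.sqrt (disc D) / γ (i + 2).toNat - |Nm D (a i)| / (γ (i + 2).toNat) ^ 2) ∧
    (∀ i : ℤ, -1 ≤ i →
      |Nm D (a i)| < Real.sqrt (disc D) / (u (i + 1).toNat : ℝ)) := by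
  have hD₁ : 1 ≤ D := by omega
  refine ⟨fun i hi => ?_, fun i hi => ?_⟩ <;>
    obtain ⟨n, rfl⟩ : ∃ n : ℕ, i = n - 1 := ⟨(i + 1).toNat, by omega⟩
  · rw [sub_add_cancel, show ((n : ℤ) - 1 + 2).toNat = n + 1 by omega]
    exact hconv.abs_Nm_eq_sqrt_disc_div_sub hD₁ hCF n
  · rw [sub_add_cancel, Int.toNat_natCast]
    exact hconv.abs_Nm_lt_sqrt_disc_div hD₁ hCF n

/-- `N_{i+1} = √Δ/γ_{i+2} - N_i/γ_{i+2}²` and `N_i < √Δ/u_{i+1}`. -/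
theorem stmt7 (D : ℕ) (hD : 2 ≤ D) (hsq : Squarefree D)
    (u : ℕ → ℕ) (γ : ℕ → ℝ) (hCF : CFData D u γ)
    (a : ℤ → OK) (hconv : ConvData D u a) :
    (∀ i : ℤ, -1 ≤ i →
      |Nm D (a (i + 1))| =
        Real.sqrt (disc D) / γ (i + 2).toNat - |Nm D (a i)| / (γ (i + 2).toNat) ^ 2) ∧
    (∀ i : ℤ, -1 ≤ i →
      |Nm D (a i)| < Real.sqrt (disc D) / (u (i + 1).toNat : ℝ)) :=
  stmt7_general D hD u γ hCF a hconv
end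
end
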